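/- arXiv:1310.3463 — 2 statements merged into one kernel-verified Lean document; each statement's English description precedes it below -/
import Mathlib

section
/- Let k2 > k1 and let φ be defined by φ(s) = ((1+k1 s²)(1+k2 s²))^{1/4} · exp(∫₀^s √(k2−k1)/(2(1+k1 t²)√(1+k2 t²)) dt) on a symmetric interval where 1+k1 s² > 0. Then 1/φ(s)² + 1/φ(−s)² = 2/(1+k1 s²) for all s in the interval. -/
/-!
With `c = √(k₂ - k₁)`, `A = 1 + k₁s²`, `B = 1 + k₂s²` one has `(√B + cs)(√B - cs) = A`, and
`t ↦ log (√(1 + k₂t²) + ct) - log √(1 + k₁t²)` is an antiderivative of twice the integrand.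
Hence `φ(s)² = √(AB) · (√B + cs)/√A = √B (√B + cs)`, and likewise `φ(-s)² = √B (√B - cs)`,
so `1/φ(s)² + 1/φ(-s)² = (2√B)/(√B · A) = 2/A`.
-/

open Real

lemma one_add_mul_sq_pos_of_sq_le {k s t : ℝ} (hs : 0 < 1 + k * s ^ 2) (hts : t ^ 2 ≤ s ^ 2) :
    0 < 1 + k * t ^ 2 := by
  rcases le_total 0 k with hk | hk <;> nlinarith [sq_nonneg t]

section

variable {k₁ k₂ t : ℝ}

lemma sqrt_add_mul_mul_sqrt_sub_mul (hk : k₁ ≤ k₂) (hB : 0 ≤ 1 + k₂ * t ^ 2) :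
    (√(1 + k₂ * t ^ 2) + √(k₂ - k₁) * t) * (√(1 + k₂ * t ^ 2) - √(k₂ - k₁) * t)
      = 1 + k₁ * t ^ 2 := by
  have hc : √(k₂ - k₁) ^ 2 = k₂ - k₁ := sq_sqrt (by linarith)
  linear_combination sq_sqrt hB - t ^ 2 * hc

lemma sqrt_add_mul_pos_and_sqrt_sub_mul_pos (hk : k₁ ≤ k₂) (hA : 0 < 1 + k₁ * t ^ 2) :
    0 < √(1 + k₂ * t ^ 2) + √(k₂ - k₁) * t ∧ 0 < √(1 + k₂ * t ^ 2) - √(k₂ - k₁) * t := by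
  have hB : 0 < 1 + k₂ * t ^ 2 := by nlinarith [sq_nonneg t]
  have hprod := sqrt_add_mul_mul_sqrt_sub_mul hk hB.le
  have hsqrt : 0 < √(1 + k₂ * t ^ 2) := sqrt_pos.mpr hB
  constructor <;> nlinarith

lemma hasDerivAt_log_sqrt_add_mul_sub_log (hk : k₁ ≤ k₂) (hA : 0 < 1 + k₁ * t ^ 2) :
    HasDerivAt (fun x => log (√(1 + k₂ * x ^ 2) + √(k₂ - k₁) * x) - log (1 + k₁ * x ^ 2) / 2)
      (2 * (√(k₂ - k₁) / (2 * (1 + k₁ * t ^ 2) * √(1 + k₂ * t ^ 2)))) t := by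
  have hB : 0 < 1 + k₂ * t ^ 2 := by nlinarith [sq_nonneg t]
  have hS : √(1 + k₂ * t ^ 2) ^ 2 = 1 + k₂ * t ^ 2 := sq_sqrt hB.le
  have hc : √(k₂ - k₁) ^ 2 = k₂ - k₁ := sq_sqrt (by linarith)
  have hu := (sqrt_add_mul_pos_and_sqrt_sub_mul_pos hk hA).1
  have hpoly (k : ℝ) : HasDerivAt (fun x : ℝ => 1 + k * x ^ 2) (k * (2 * t)) t := by
    simpa using ((hasDerivAt_pow 2 t).const_mul k).const_add 1
  have hsum : HasDerivAt (fun x => √(1 + k₂ * x ^ 2) + √(k₂ - k₁) * x)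
      (k₂ * (2 * t) / (2 * √(1 + k₂ * t ^ 2)) + √(k₂ - k₁)) t :=
    ((hpoly k₂).sqrt hB.ne').add ((hasDerivAt_id' t).const_mul _) |>.congr_deriv (by ring)
  refine ((hsum.log hu.ne').sub ((hpoly k₁).log hA.ne' |>.div_const 2)).congr_deriv ?_
  have hu' : √(1 + k₂ * t ^ 2) + t * √(k₂ - k₁) ≠ 0 := by linarith
  have hA' : 1 + t ^ 2 * k₁ ≠ 0 := by linarith
  field_simp
  linear_combination (-k₁ * t) * hS - t * hc

lemma integral_sqrt_div_eq_log (hk : k₁ ≤ k₂) {s : ℝ} (hs : 0 < 1 + k₁ * s ^ 2) :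
    ∫ t in (0 : ℝ)..s, √(k₂ - k₁) / (2 * (1 + k₁ * t ^ 2) * √(1 + k₂ * t ^ 2))
      = (log (√(1 + k₂ * s ^ 2) + √(k₂ - k₁) * s) - log (1 + k₁ * s ^ 2) / 2) / 2 := by
  have hA : ∀ t ∈ Set.uIcc 0 s, 0 < 1 + k₁ * t ^ 2 := by
    intro t ht
    refine one_add_mul_sq_pos_of_sq_le hs ?_
    rcases Set.mem_uIcc.mp ht with ⟨h0, h1⟩ | ⟨h0, h1⟩ <;> nlinarith
  have hcont : ContinuousOn
      (fun t => √(k₂ - k₁) / (2 * (1 + k₁ * t ^ 2) * √(1 + k₂ * t ^ 2))) (Set.uIcc 0 s) := by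
    refine continuousOn_const.div (by fun_prop) fun t ht => ?_
    have hB : 0 < 1 + k₂ * t ^ 2 := by nlinarith [hA t ht, sq_nonneg t]
    exact (mul_pos (mul_pos two_pos (hA t ht)) (sqrt_pos.mpr hB)).ne'
  rw [eq_div_iff two_ne_zero, ← intervalIntegral.integral_mul_const,
    intervalIntegral.integral_eq_sub_of_hasDerivAt
      (fun t ht => (hasDerivAt_log_sqrt_add_mul_sub_log hk (hA t ht)).congr_deriv (mul_comm _ _))
      ((hcont.mul continuousOn_const).intervalIntegrable)]
  simp

lemma sq_rpow_mul_exp_integral (hk : k₁ ≤ k₂) {s : ℝ} (hs : 0 < 1 + k₁ * s ^ 2) :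
    (((1 + k₁ * s ^ 2) * (1 + k₂ * s ^ 2)) ^ ((1 : ℝ) / 4) *
      exp (∫ t in (0 : ℝ)..s, √(k₂ - k₁) / (2 * (1 + k₁ * t ^ 2) * √(1 + k₂ * t ^ 2)))) ^ 2
      = √(1 + k₂ * s ^ 2) * (√(1 + k₂ * s ^ 2) + √(k₂ - k₁) * s) := by
  have hB : 0 < 1 + k₂ * s ^ 2 := by nlinarith [sq_nonneg s]
  have hu := (sqrt_add_mul_pos_and_sqrt_sub_mul_pos hk hs).1
  have hsqrtA : 0 < √(1 + k₁ * s ^ 2) := sqrt_pos.mpr hs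
  have hrpow : (((1 + k₁ * s ^ 2) * (1 + k₂ * s ^ 2)) ^ ((1 : ℝ) / 4)) ^ 2
      = √(1 + k₁ * s ^ 2) * √(1 + k₂ * s ^ 2) := by
    rw [← rpow_natCast, ← rpow_mul (by positivity), ← sqrt_mul hs.le, sqrt_eq_rpow]
    norm_num
  have hexp : exp (∫ t in (0 : ℝ)..s, √(k₂ - k₁) / (2 * (1 + k₁ * t ^ 2) * √(1 + k₂ * t ^ 2))) ^ 2
      = (√(1 + k₂ * s ^ 2) + √(k₂ - k₁) * s) / √(1 + k₁ * s ^ 2) := by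
    rw [← exp_nat_mul, integral_sqrt_div_eq_log hk hs, ← log_sqrt hs.le, ← log_div hu.ne' hsqrtA.ne']
    rw [Nat.cast_ofNat, mul_div_cancel₀ _ two_ne_zero, exp_log (div_pos hu hsqrtA)]
  rw [mul_pow, hrpow, hexp]
  field_simp

end

theorem stmt_4_general (k1 k2 b0 : ℝ) (hk : k1 < k2)
    (hpos : ∀ s ∈ Set.Ioo (-b0) b0, 0 < 1 + k1 * s ^ 2)
    (φ : ℝ → ℝ)
    (hφ : ∀ s, φ s = ((1 + k1 * s ^ 2) * (1 + k2 * s ^ 2)) ^ ((1 : ℝ) / 4) *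
      Real.exp (∫ t in (0 : ℝ)..s,
        Real.sqrt (k2 - k1) / (2 * (1 + k1 * t ^ 2) * Real.sqrt (1 + k2 * t ^ 2)))) :
    ∀ s ∈ Set.Ioo (-b0) b0,
      1 / (φ s) ^ 2 + 1 / (φ (-s)) ^ 2 = 2 / (1 + k1 * s ^ 2) := by
  intro s hs
  have hA := hpos s hs
  have hA' : 0 < 1 + k1 * (-s) ^ 2 := by rwa [neg_sq]
  rw [hφ, hφ, sq_rpow_mul_exp_integral hk.le hA, sq_rpow_mul_exp_integral hk.le hA', neg_sq]
  have hB : 0 < 1 + k2 * s ^ 2 := by nlinarith [sq_nonneg s]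
  have hS : 0 < √(1 + k2 * s ^ 2) := sqrt_pos.mpr hB
  obtain ⟨hu, hv⟩ := sqrt_add_mul_pos_and_sqrt_sub_mul_pos hk.le hA
  have hprod := sqrt_add_mul_mul_sqrt_sub_mul hk.le hB.le
  rw [mul_neg, ← sub_eq_add_neg, div_add_div _ _ (by positivity) (by positivity),
    div_eq_div_iff (by positivity) hA.ne']
  linear_combination (-2 * √(1 + k2 * s ^ 2) ^ 2) * hprod

/-- `1/φ(s)² + 1/φ(−s)² = 2/(1+k1 s²)` on a symmetric interval. -/
theorem stmt_4 (k1 k2 b0 : ℝ) (hk : k1 < k2) (hb0 : 0 < b0)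
    (hpos : ∀ s ∈ Set.Ioo (-b0) b0, 0 < 1 + k1 * s ^ 2)
    (φ : ℝ → ℝ)
    (hφ : ∀ s, φ s = ((1 + k1 * s ^ 2) * (1 + k2 * s ^ 2)) ^ ((1 : ℝ) / 4) *
      Real.exp (∫ t in (0 : ℝ)..s,
        Real.sqrt (k2 - k1) / (2 * (1 + k1 * t ^ 2) * Real.sqrt (1 + k2 * t ^ 2)))) :
    ∀ s ∈ Set.Ioo (-b0) b0,
      1 / (φ s) ^ 2 + 1 / (φ (-s)) ^ 2 = 2 / (1 + k1 * s ^ 2) :=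
  stmt_4_general k1 k2 b0 hk hpos φ hφ
end

section
/- Let a₁, a₂ be reals with a₁ ≠ 0, set k1 = 2a₂−3a₁², k2 = 2a₂+a₁², and let b > 0 with 1+2a₂b² ≠ 0 and 1+k1b² > 0. Then the pair δ = (3a₁²−2a₂)(1+(2a₂+a₁²)b²)/(1+2a₂b²) and λ = ((3a₁²−2a₂)(2a₂+a₁²)b²+2(a₁²−a₂))/(1+2a₂b²) satisfies the compatibility relation δ = −(f'(b)/(b·f(b)))·(1−λb²) with f(b) = √(1+(2a₂−3a₁²)b²); i.e., substituting f(b) = √(1+k1b²) into −f'(b)(1−λb²)/(b f(b)) gives exactly δ. -/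
/-!
Since `f'/f = k₁ b / (1 + k₁ b²)`, the right-hand side equals `-k₁ (1 - λ b²) / (1 + k₁ b²)`.
The numerator of `1 - λ b²` factors as `(1 + k₁ b²)(1 + k₂ b²)` with `k₂ = 2a₂ + a₁²`, because
`k₁ + k₂ = 4a₂ - 2a₁²`; the factor `1 + k₁ b²` cancels and what remains is `δ`.
-/

lemma hasDerivAt_sqrt_one_add_mul_sq {k b : ℝ} (h : 0 < 1 + k * b ^ 2) :
    HasDerivAt (fun x => √(1 + k * x ^ 2)) (k * b / √(1 + k * b ^ 2)) b := by
  have hinner : HasDerivAt (fun x : ℝ => 1 + k * x ^ 2) (k * (2 * b)) b := by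
    simpa using ((hasDerivAt_pow 2 b).const_mul k).const_add 1
  convert hinner.sqrt h.ne' using 1
  field_simp

lemma deriv_sqrt_one_add_mul_sq_div {k b : ℝ} (hb : b ≠ 0) (h : 0 < 1 + k * b ^ 2) :
    deriv (fun x => √(1 + k * x ^ 2)) b / (b * √(1 + k * b ^ 2)) = k / (1 + k * b ^ 2) := by
  have hsq : √(1 + k * b ^ 2) ^ 2 = 1 + k * b ^ 2 := Real.sq_sqrt h.le
  have hs : √(1 + k * b ^ 2) ≠ 0 := (Real.sqrt_pos.mpr h).ne'
  rw [(hasDerivAt_sqrt_one_add_mul_sq h).deriv]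
  field_simp
  rw [hsq]

lemma one_sub_mul_sq_eq_factored {a1 a2 b : ℝ} (h : 1 + 2 * a2 * b ^ 2 ≠ 0) :
    1 - ((3 * a1 ^ 2 - 2 * a2) * (2 * a2 + a1 ^ 2) * b ^ 2 + 2 * (a1 ^ 2 - a2)) /
        (1 + 2 * a2 * b ^ 2) * b ^ 2 =
      (1 + (2 * a2 - 3 * a1 ^ 2) * b ^ 2) * (1 + (2 * a2 + a1 ^ 2) * b ^ 2) /
        (1 + 2 * a2 * b ^ 2) := by
  field_simp
  ring

theorem stmt_19_general (a1 a2 b k1 δ lam : ℝ) (hb : 0 < b)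
    (hk1 : k1 = 2 * a2 - 3 * a1 ^ 2)
    (h1 : 1 + 2 * a2 * b ^ 2 ≠ 0) (h2 : 0 < 1 + k1 * b ^ 2)
    (f : ℝ → ℝ) (hf : ∀ x, f x = Real.sqrt (1 + k1 * x ^ 2))
    (hδ : δ = (3 * a1 ^ 2 - 2 * a2) * (1 + (2 * a2 + a1 ^ 2) * b ^ 2) / (1 + 2 * a2 * b ^ 2))
    (hlam : lam = ((3 * a1 ^ 2 - 2 * a2) * (2 * a2 + a1 ^ 2) * b ^ 2 + 2 * (a1 ^ 2 - a2)) /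
      (1 + 2 * a2 * b ^ 2)) :
    δ = -(deriv f b / (b * f b)) * (1 - lam * b ^ 2) := by
  obtain rfl : f = fun x => √(1 + k1 * x ^ 2) := funext hf
  rw [deriv_sqrt_one_add_mul_sq_div hb.ne' h2, hlam, one_sub_mul_sq_eq_factored h1, hδ]
  rw [← hk1, show 3 * a1 ^ 2 - 2 * a2 = -k1 by rw [hk1]; ring]
  field_simp [h2.ne']

/-- the pair `(δ, λ)` of formulas (4.24)–(4.25) satisfies the defining
relation `δ = −(f'(b)/(b f(b)))(1 − λb²)` with `f(b) = √(1+(2a₂−3a₁²)b²)`. -/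
theorem stmt_19 (a1 a2 b k1 δ lam : ℝ) (ha1 : a1 ≠ 0) (hb : 0 < b)
    (hk1 : k1 = 2 * a2 - 3 * a1 ^ 2)
    (h1 : 1 + 2 * a2 * b ^ 2 ≠ 0) (h2 : 0 < 1 + k1 * b ^ 2)
    (f : ℝ → ℝ) (hf : ∀ x, f x = Real.sqrt (1 + k1 * x ^ 2))
    (hδ : δ = (3 * a1 ^ 2 - 2 * a2) * (1 + (2 * a2 + a1 ^ 2) * b ^ 2) / (1 + 2 * a2 * b ^ 2))
    (hlam : lam = ((3 * a1 ^ 2 - 2 * a2) * (2 * a2 + a1 ^ 2) * b ^ 2 + 2 * (a1 ^ 2 - a2)) /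
      (1 + 2 * a2 * b ^ 2)) :
    δ = -(deriv f b / (b * f b)) * (1 - lam * b ^ 2) :=
  stmt_19_general a1 a2 b k1 δ lam hb hk1 h1 h2 f hf hδ hlam
end
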